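/- For complex numbers y and a, the polynomials p_n(y) = y(y-na)^{n-1} (with p_0=1) satisfy \sum_{n\ge 0} p_n(y) z^n/n! = e^{y w(z)} as formal power series, where w(z) is the compositional inverse of the formal power series z e^{a z}. -/

import Mathlib

open PowerSeries

/-- Composition `f ∘ g` of formal power series (the intended use is when the
constant coefficient of `g` vanishes, in which case the defining sum is the
honest composition). -/
noncomputable def psComp (f g : PowerSeries ℂ) : PowerSeries ℂ :=
  PowerSeries.mk fun n => ∑ k ∈ Finset.range (n + 1),
    (PowerSeries.coeff k f) * (PowerSeries.coeff n (g ^ k))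

/-- `e^u` for a power series `u` with zero constant coefficient. -/
noncomputable def psExp (u : PowerSeries ℂ) : PowerSeries ℂ :=
  psComp (PowerSeries.exp ℂ) u

/-! Since `e^{c w}` is the substitution of `w` into `e^{c X}`, the exponential law
`e^{c X} e^{d X} = e^{(c + d) X}` passes to the series `e^{c w}`; together with `w e^{a w} = X`
it gives `w^k = X^k e^{-k a w}`. Expanding `e^{c w} = ∑ c^k w^k / k!`, the coefficient of `z^n`
in `e^{c w}` is thus a combination of lower coefficients of the series `e^{-k a w}`, which by strong
induction are Abel polynomials evaluated at `-k a`. Since `(n + k) p_n(-k a) = k (-(n + k) a)^n`,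
the resulting sum is the binomial expansion of `c (c - n a)^{n-1}`. -/

open Finset

lemma PowerSeries.coeff_pow_eq_zero_of_lt {R : Type*} [CommRing R] {g : PowerSeries R}
    (hg : constantCoeff g = 0) {n k : ℕ} (h : n < k) : coeff n (g ^ k) = 0 :=
  coeff_of_lt_order n <| (Nat.cast_lt.mpr h).trans_le (le_order_pow_of_constantCoeff_eq_zero k hg)

section Abel

variable {R : Type*} [CommRing R]

def abelPoly (a : R) (n : ℕ) (y : R) : R :=
  if n = 0 then 1 else y * (y - n * a) ^ (n - 1)

lemma abelPoly_succ_eq_sum (a y : R) (m : ℕ) :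
    abelPoly a (m + 1) y =
      ∑ j ∈ range (m + 1), y ^ (j + 1) * (-((m + 1 : ℕ) * a)) ^ (m - j) * m.choose j := by
  rw [abelPoly, if_neg m.succ_ne_zero, Nat.add_sub_cancel, sub_eq_add_neg, add_pow, mul_sum]
  exact sum_congr rfl fun j _ => by ring

lemma natCast_add_mul_abelPoly_neg_natCast_mul (a : R) (n k : ℕ) :
    (n + k : R) * abelPoly a n (-(k * a)) = k * (-((n + k : ℕ) * a)) ^ n := by
  rcases n with _ | n
  · simp [abelPoly]
  · rw [abelPoly, if_neg n.succ_ne_zero, Nat.add_sub_cancel, pow_succ]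
    push_cast
    ring

lemma factorial_div_mul_abelPoly {K : Type*} [Field K] [CharZero K] (a y : K) {j m : ℕ}
    (hj : j ≤ m) :
    y ^ (j + 1) / (j + 1).factorial *
        (abelPoly a (m - j) (-((j + 1 : ℕ) * a)) / (m - j).factorial) =
      y ^ (j + 1) * (-((m + 1 : ℕ) * a)) ^ (m - j) * m.choose j / (m + 1).factorial := by
  have h := natCast_add_mul_abelPoly_neg_natCast_mul a (m - j) (j + 1)
  rw [show m - j + (j + 1) = m + 1 by omega] at h
  rw [Nat.cast_choose K hj, Nat.factorial_succ j, Nat.factorial_succ m]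
  have : (m.factorial : K) ≠ 0 := Nat.cast_ne_zero.mpr m.factorial_ne_zero
  push_cast [hj] at h ⊢
  field_simp
  linear_combination y ^ (j + 1) / (j.factorial * (m - j).factorial) * h

end Abel

lemma psComp_eq_subst (f : PowerSeries ℂ) {g : PowerSeries ℂ} (hg : constantCoeff g = 0) :
    psComp f g = subst g f := by
  ext n
  rw [coeff_subst' (HasSubst.of_constantCoeff_zero' hg), psComp, coeff_mk,
    finsum_eq_sum_of_support_subset _ (s := range (n + 1))]
  · rfl
  · intro k hk
    rw [coe_range, Set.mem_Iio, Nat.lt_succ_iff]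
    by_contra! h
    exact hk (by simp only [coeff_pow_eq_zero_of_lt hg h, smul_zero])

lemma psExp_smul_eq_subst {u : PowerSeries ℂ} (hu : constantCoeff u = 0) (c : ℂ) :
    psExp (c • u) = subst u (rescale c (exp ℂ)) := by
  rw [← psComp_eq_subst _ hu]
  ext n
  simp only [psExp, psComp, coeff_mk, coeff_rescale, smul_pow, coeff_smul, smul_eq_mul,
    mul_left_comm, mul_assoc]

lemma psExp_smul_mul_psExp_smul {u : PowerSeries ℂ} (hu : constantCoeff u = 0) (c d : ℂ) :
    psExp (c • u) * psExp (d • u) = psExp ((c + d) • u) := by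
  rw [psExp_smul_eq_subst hu, psExp_smul_eq_subst hu, psExp_smul_eq_subst hu,
    ← subst_mul (HasSubst.of_constantCoeff_zero' hu), exp_mul_exp_eq_exp_add]

lemma psExp_smul_pow {u : PowerSeries ℂ} (hu : constantCoeff u = 0) (c : ℂ) (k : ℕ) :
    psExp (c • u) ^ k = psExp ((k * c) • u) := by
  rw [psExp_smul_eq_subst hu, psExp_smul_eq_subst hu,
    ← subst_pow (HasSubst.of_constantCoeff_zero' hu), ← map_pow, exp_pow_eq_rescale_exp,
    rescale_rescale]

lemma psExp_zero_smul {u : PowerSeries ℂ} (hu : constantCoeff u = 0) :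
    psExp ((0 : ℂ) • u) = 1 := by
  simpa using (psExp_smul_pow hu 0 0).symm

lemma pow_eq_X_pow_mul_psExp {a : ℂ} {w : PowerSeries ℂ} (hw0 : constantCoeff w = 0)
    (hw : w * psExp (a • w) = X) (k : ℕ) :
    w ^ k = X ^ k * psExp ((-(k * a)) • w) := by
  have hinv : psExp (a • w) * psExp ((-a) • w) = 1 := by
    rw [psExp_smul_mul_psExp_smul hw0, add_neg_cancel, psExp_zero_smul hw0]
  have hw' : w = X * psExp ((-a) • w) := by
    rw [← hw, mul_assoc, hinv, mul_one]
  rw [← mul_neg, ← psExp_smul_pow hw0, ← mul_pow, ← hw']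

lemma coeff_psExp_smul (c : ℂ) (u : PowerSeries ℂ) (n : ℕ) :
    coeff n (psExp (c • u)) = ∑ k ∈ range (n + 1), c ^ k / k.factorial * coeff n (u ^ k) := by
  simp only [psExp, psComp, coeff_mk, coeff_exp, smul_pow, coeff_smul, smul_eq_mul, map_div₀,
    map_one, map_natCast]
  exact sum_congr rfl fun k _ => by ring

lemma coeff_psExp_smul_eq_abelPoly {a : ℂ} {w : PowerSeries ℂ} (hw0 : constantCoeff w = 0)
    (hw : w * psExp (a • w) = X) (n : ℕ) (c : ℂ) :
    coeff n (psExp (c • w)) = abelPoly a n c / n.factorial := by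
  induction n using Nat.strong_induction_on generalizing c with
  | _ n ih =>
    rcases n with _ | m
    · simp [coeff_psExp_smul, abelPoly]
    rw [coeff_psExp_smul, sum_range_succ', abelPoly_succ_eq_sum, sum_div]
    have hterm (j : ℕ) (hj : j ∈ range (m + 1)) :
        c ^ (j + 1) / (j + 1).factorial * coeff (m + 1) (w ^ (j + 1)) =
          c ^ (j + 1) * (-((m + 1 : ℕ) * a)) ^ (m - j) * m.choose j / (m + 1).factorial := by
      have hj : j ≤ m := Nat.lt_succ_iff.mp (mem_range.mp hj)
      rw [pow_eq_X_pow_mul_psExp hw0 hw, coeff_X_pow_mul', if_pos (by omega),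
        Nat.add_sub_add_right, ih _ (by omega), factorial_div_mul_abelPoly a c hj]
    simp [sum_congr rfl hterm]

/-- Lagrange inversion for `z e^{a z}`:  if `w` is the compositional inverse of
`z e^{a z}` then `∑_{n≥0} y (y - n a)^{n-1} zⁿ/n! = e^{y w(z)}`. -/
theorem abel_egf (y a : ℂ) (w : PowerSeries ℂ)
    (hw0 : PowerSeries.constantCoeff w = 0)
    (hw : w * psExp (a • w) = PowerSeries.X) :
    (PowerSeries.mk fun n =>
        (if n = 0 then 1 else y * (y - n * a) ^ (n - 1)) / (n.factorial : ℂ)) =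
      psExp (y • w) := by
  ext n
  rw [coeff_mk, coeff_psExp_smul_eq_abelPoly hw0 hw]
  rfl
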